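/- Let Ψ be a non-linear branching mechanism, let u be a flow for Ψ, and suppose Ψ(λ) > 0 for all λ ≥ θ₀, for some θ₀ > 0. For t > 0 set v(t) := lim_{λ→∞} u(t,λ) ∈ (0,∞] (the limit exists since λ ↦ u(t,λ) is nondecreasing). If ∫_{θ₀}^{∞} dλ/Ψ(λ) < ∞, then for every t > 0 one has v(t) < ∞ and ∫_{v(t)}^{∞} dλ/Ψ(λ) = t. If ∫_{θ₀}^{∞} dλ/Ψ(λ) = ∞, then v(t) = ∞ for every t > 0. -/

import Mathlib

open MeasureTheory Set Filter Topology
open scoped ENNReal NNReal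

/-- The Lévy–Khintchine shape of a branching mechanism:
`Ψ(λ) = αλ + βλ² + ∫_{(0,∞)} (e^{−λr} − 1 + λr·1_{r<1}) π(dr)`. -/
noncomputable def psiShape (a b : ℝ) (piM : Measure ℝ) (l : ℝ) : ℝ :=
  a * l + b * l ^ 2 +
    ∫ r, (Real.exp (-l * r) - 1 + (if r < 1 then l * r else 0)) ∂piM

/-- `Ψ` is a branching mechanism with parameters `a = α`, `b = β` and Lévy measure `piM = π`:
`β ≥ 0`, `π` is carried by `(0,∞)`, `∫ (1 ∧ r²) π(dr) < ∞`, and `Ψ` has the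
Lévy–Khintchine form on `[0,∞)`. -/
def IsBranchingMechanism (Ψ : ℝ → ℝ) (a b : ℝ) (piM : Measure ℝ) : Prop :=
  0 ≤ b ∧ piM (Set.Ioi (0:ℝ))ᶜ = 0 ∧
    (∫⁻ r, ENNReal.ofReal (min 1 (r ^ 2)) ∂piM) < ⊤ ∧
    ∀ l, 0 ≤ l → Ψ l = psiShape a b piM l

/-- Non-linearity of the branching mechanism: `β > 0` or `π ≠ 0`. -/
def IsNonLinear (b : ℝ) (piM : Measure ℝ) : Prop := 0 < b ∨ piM ≠ 0

/-- Finite variation type: `β = 0` and `∫_{(0,1)} r π(dr) < ∞`. -/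
def FiniteVariationType (b : ℝ) (piM : Measure ℝ) : Prop :=
  b = 0 ∧ (∫⁻ r in Set.Ioo (0:ℝ) 1, ENNReal.ofReal r ∂piM) < ⊤

/-- The drift constant `D = α + ∫_{(0,1)} r π(dr)` (finite variation cases). -/
noncomputable def Dconst (a : ℝ) (piM : Measure ℝ) : ℝ :=
  a + ∫ r in Set.Ioo (0:ℝ) 1, r ∂piM

/-- `u` is a flow for `Ψ`: for every `λ > 0`, `u(0,λ) = λ`, `u(t,λ) > 0` and
`∂_t u(t,λ) = −Ψ(u(t,λ))` on `[0,∞)`. -/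
def IsFlow (Ψ : ℝ → ℝ) (u : ℝ → ℝ → ℝ) : Prop :=
  (∀ l, 0 < l → u 0 l = l) ∧
  (∀ l, 0 < l → ∀ t, 0 ≤ t → 0 < u t l) ∧
  (∀ l, 0 < l → ∀ t, 0 ≤ t →
    HasDerivWithinAt (fun s => u s l) (-(Ψ (u t l))) (Set.Ici 0) t)

/-!
`Ψ` is convex on `[0, ∞)` with `Ψ 0 = 0`, so it has a largest zero `γ < θ₀`, is positive on
`(γ, ∞)` and at most linear near `γ`. Then `W x = ∫_{θ₀}^x dλ / Ψ λ` is a first integral of the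
flow, `W (u t λ) = W λ - t`, and since `W → -∞` (logarithmically) at `γ⁺` the flow started above
`γ` never reaches `γ`. Now let `λ → ∞`. If `1 / Ψ` is integrable, `W λ → J` finite, and
`W (u t λ) → J - t` forces `u t λ` to converge to some `L > γ` with `W L = J - t`, i.e.
`∫_L^∞ dλ / Ψ λ = t`. Otherwise `W λ → ∞`, and as `W` is monotone this forces `u t λ → ∞`.
-/

lemma exp_neg_sub_one_add_le_sq {x : ℝ} (hx : 0 ≤ x) : Real.exp (-x) - 1 + x ≤ x ^ 2 := by
  rcases le_or_gt x 1 with h | h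
  · have := Real.abs_exp_sub_one_sub_id_le (x := -x) (by rwa [abs_neg, abs_of_nonneg hx])
    nlinarith [(abs_le.mp this).2]
  · nlinarith [Real.exp_le_one_iff.mpr (neg_nonpos.mpr hx)]

lemma integrable_levyKhintchine_integrand {piM : Measure ℝ} (hcarr : piM (Ioi 0)ᶜ = 0)
    (hfin : ∫⁻ r, ENNReal.ofReal (min 1 (r ^ 2)) ∂piM < ⊤) {l : ℝ} (hl : 0 ≤ l) :
    Integrable (fun r => Real.exp (-l * r) - 1 + (if r < 1 then l * r else 0)) piM := by
  have hmin : Integrable (fun r : ℝ => min 1 (r ^ 2)) piM := by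
    refine ⟨(measurable_const.min (measurable_id.pow_const 2)).aestronglyMeasurable, ?_⟩
    rwa [hasFiniteIntegral_iff_ofReal (Eventually.of_forall fun r => by positivity)]
  refine (hmin.const_mul (1 + l ^ 2)).mono' (Measurable.aestronglyMeasurable
    ((by fun_prop : Measurable fun r : ℝ => Real.exp (-l * r) - 1).add
      (Measurable.ite measurableSet_Iio (by fun_prop) measurable_const))) ?_
  filter_upwards [mem_ae_iff.mpr hcarr] with r (hr : 0 < r)
  rcases lt_or_ge r 1 with h1 | h1
  · have hlr := exp_neg_sub_one_add_le_sq (mul_nonneg hl hr.le)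
    have hlr' := Real.add_one_le_exp (-(l * r))
    rw [if_pos h1, min_eq_right (by nlinarith), neg_mul, Real.norm_eq_abs,
      abs_of_nonneg (by linarith)]
    nlinarith [sq_nonneg r]
  · have h0 := Real.exp_pos (-l * r)
    have h1' := Real.exp_le_one_iff.mpr (by nlinarith : -l * r ≤ 0)
    rw [if_neg h1.not_gt, min_eq_left (by nlinarith), Real.norm_eq_abs, abs_le]
    constructor <;> nlinarith

lemma convexOn_levyKhintchine_integrand (r : ℝ) :
    ConvexOn ℝ univ fun l : ℝ => Real.exp (-l * r) - 1 + (if r < 1 then l * r else 0) := by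
  have hexp : ConvexOn ℝ univ fun l : ℝ => Real.exp (-l * r) := by
    simpa [Function.comp_def, mul_comm] using
      convexOn_exp.comp_linearMap (LinearMap.mulRight ℝ (-r))
  have hlin : ConvexOn ℝ univ fun l : ℝ => if r < 1 then l * r else 0 := by
    split_ifs
    · exact (LinearMap.mulRight ℝ r).convexOn convex_univ
    · exact convexOn_const 0 convex_univ
  exact ((hexp.add_const (-1)).add hlin).congr fun l _ => by simp [sub_eq_add_neg]

namespace IsBranchingMechanism

variable {Ψ : ℝ → ℝ} {a b : ℝ} {piM : Measure ℝ}

lemma apply_zero (hbm : IsBranchingMechanism Ψ a b piM) : Ψ 0 = 0 := by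
  simp [hbm.2.2.2 0 le_rfl, psiShape]

lemma convexOn (hbm : IsBranchingMechanism Ψ a b piM) : ConvexOn ℝ (Ici 0) Ψ := by
  obtain ⟨hb, hcarr, hfin, hshape⟩ := hbm
  have hpoly : ConvexOn ℝ (Ici 0) fun l : ℝ => a * l + b * l ^ 2 :=
    ((LinearMap.mulLeft ℝ a).convexOn (convex_Ici 0)).add ((convexOn_pow 2).smul hb)
  have hint : ConvexOn ℝ (Ici 0) fun l : ℝ =>
      ∫ r, (Real.exp (-l * r) - 1 + (if r < 1 then l * r else 0)) ∂piM :=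
    integral_convexOn_of_integrand_ae (convex_Ici 0)
      (ae_of_all _ fun r => (convexOn_levyKhintchine_integrand r).subset (subset_univ _)
        (convex_Ici 0))
      fun l hl => integrable_levyKhintchine_integrand hcarr hfin hl
  exact (hpoly.add hint).congr fun l hl => (hshape l hl).symm

end IsBranchingMechanism

lemma exists_nonpos_and_pos_of_gt {Ψ : ℝ → ℝ} (hcont : ContinuousOn Ψ (Ioi 0)) (h0 : Ψ 0 ≤ 0)
    {θ₀ : ℝ} (hpos : ∀ l, θ₀ ≤ l → 0 < Ψ l) :
    ∃ γ, 0 ≤ γ ∧ γ < θ₀ ∧ Ψ γ ≤ 0 ∧ ∀ x, γ < x → 0 < Ψ x := by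
  set S := {x : ℝ | 0 ≤ x ∧ Ψ x ≤ 0}
  have hlt : ∀ x ∈ S, x < θ₀ := fun x hx => lt_of_not_ge fun h => (hpos x h).not_ge hx.2
  have hne : S.Nonempty := ⟨0, le_rfl, h0⟩
  have hbdd : BddAbove S := ⟨θ₀, fun x hx => (hlt x hx).le⟩
  have hγ0 : 0 ≤ sSup S := le_csSup hbdd ⟨le_rfl, h0⟩
  have hΨγ : Ψ (sSup S) ≤ 0 := by
    rcases hγ0.eq_or_lt with h | h
    · rwa [← h]
    · exact (hcont.continuousAt (Ioi_mem_nhds h)).continuousWithinAt.closure_le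
        (csSup_mem_closure hne hbdd) continuousWithinAt_const fun y hy => hy.2
  refine ⟨sSup S, hγ0, hlt _ ⟨hγ0, hΨγ⟩, hΨγ, fun x hx => ?_⟩
  by_contra! h
  exact (le_csSup hbdd ⟨hγ0.trans hx.le, h⟩).not_gt hx

lemma hasDerivAt_intervalIntegral_of_continuousOn_Ioi {f : ℝ → ℝ} {γ c x : ℝ}
    (hf : ContinuousOn f (Ioi γ)) (hc : γ < c) (hx : γ < x) :
    HasDerivAt (fun x => ∫ y in c..x, f y) (f x) x :=
  intervalIntegral.integral_hasDerivAt_right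
    ((hf.mono fun _ hy => (lt_min hc hx).trans_le hy.1).intervalIntegrable)
    (hf.stronglyMeasurableAtFilter isOpen_Ioi x hx) (hf.continuousAt (Ioi_mem_nhds hx))

lemma tendsto_intervalIntegral_inv_nhdsGT_atBot {Ψ : ℝ → ℝ} {γ c K : ℝ} (hγc : γ < c)
    (hK : 0 < K) (hcont : ContinuousOn Ψ (Ioi γ)) (hpos : ∀ x, γ < x → 0 < Ψ x)
    (hle : ∀ x ∈ Ioc γ c, Ψ x ≤ K * (x - γ)) :
    Tendsto (fun x => ∫ y in c..x, (Ψ y)⁻¹) (𝓝[>] γ) atBot := by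
  have hshift : Tendsto (fun x => x - γ) (𝓝[>] γ) (𝓝[>] 0) :=
    tendsto_nhdsWithin_iff.2 ⟨tendsto_sub_nhds_zero_iff.2 nhdsWithin_le_nhds,
      eventually_nhdsWithin_of_forall fun _ hx => sub_pos.2 (mem_Ioi.1 hx)⟩
  have hlog : Tendsto (fun x => (Real.log (x - γ) - Real.log (c - γ)) / K) (𝓝[>] γ) atBot :=
    (tendsto_atBot_add_const_right _ _
      (Real.tendsto_log_nhdsGT_zero.comp hshift)).atBot_div_const hK
  refine tendsto_atBot_mono' _ ?_ hlog
  filter_upwards [Ioo_mem_nhdsGT hγc] with x hx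
  have hsub : ∀ y ∈ uIcc x c, γ < y := fun y hy => (lt_min hx.1 hγc).trans_le hy.1
  have hprim : ∀ y ∈ uIcc x c, HasDerivAt (fun y => Real.log (y - γ) / K) (K * (y - γ))⁻¹ y := by
    intro y hy
    refine ((((hasDerivAt_id' y).sub_const γ).log (sub_pos.2 (hsub y hy)).ne').div_const
      K).congr_deriv ?_
    rw [mul_inv, one_div, div_eq_mul_inv, mul_comm]
  have hint : IntervalIntegrable (fun y => (K * (y - γ))⁻¹) volume x c :=
    (ContinuousOn.inv₀ (by fun_prop) fun y hy =>
      (mul_pos hK (sub_pos.2 (hsub y hy))).ne').intervalIntegrable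
  have hcomp : ∫ y in x..c, (K * (y - γ))⁻¹ = (Real.log (c - γ) - Real.log (x - γ)) / K := by
    rw [intervalIntegral.integral_eq_sub_of_hasDerivAt hprim hint, sub_div]
  have hmono : ∫ y in x..c, (K * (y - γ))⁻¹ ≤ ∫ y in x..c, (Ψ y)⁻¹ := by
    refine intervalIntegral.integral_mono_on hx.2.le hint ?_ fun y hy => ?_
    · exact ((hcont.mono fun y hy => hsub y hy).inv₀ fun y hy =>
        (hpos y (hsub y hy)).ne').intervalIntegrable
    · have hy' : γ < y := hx.1.trans_le hy.1
      exact inv_anti₀ (hpos y hy') (hle y ⟨hy', hy.2⟩)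
  calc ∫ y in c..x, (Ψ y)⁻¹ = -∫ y in x..c, (Ψ y)⁻¹ := intervalIntegral.integral_symm x c
    _ ≤ -((Real.log (c - γ) - Real.log (x - γ)) / K) := by rw [← hcomp]; exact neg_le_neg hmono
    _ = (Real.log (x - γ) - Real.log (c - γ)) / K := by ring

section FirstIntegral

variable {Ψ W f : ℝ → ℝ} {γ : ℝ}

lemma hasDerivWithinAt_comp_add_of_hasDerivAt_inv (hΨ : ∀ x, γ < x → Ψ x ≠ 0)
    (hW : ∀ x, γ < x → HasDerivAt W (Ψ x)⁻¹ x) {s : ℝ} (hfs : γ < f s)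
    (hf : HasDerivWithinAt f (-Ψ (f s)) (Ici 0) s) :
    HasDerivWithinAt (fun s => W (f s) + s) 0 (Ici 0) s := by
  refine (((hW _ hfs).comp_hasDerivWithinAt s hf).add (hasDerivWithinAt_id s _)).congr_deriv ?_
  rw [mul_neg, inv_mul_cancel₀ (hΨ _ hfs), neg_add_cancel]

lemma comp_eq_sub_of_forall_mem_Icc (hΨ : ∀ x, γ < x → Ψ x ≠ 0)
    (hW : ∀ x, γ < x → HasDerivAt W (Ψ x)⁻¹ x)
    (hf : ∀ s, 0 ≤ s → HasDerivWithinAt f (-Ψ (f s)) (Ici 0) s) {t : ℝ} (ht : 0 ≤ t)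
    (hγ : ∀ s ∈ Icc 0 t, γ < f s) :
    W (f t) = W (f 0) - t := by
  have hF : ∀ s ∈ Icc 0 t, HasDerivWithinAt (fun s => W (f s) + s) 0 (Ici 0) s :=
    fun s hs => hasDerivWithinAt_comp_add_of_hasDerivAt_inv hΨ hW (hγ s hs) (hf s hs.1)
  have := constant_of_has_deriv_right_zero
    (fun s hs => (hF s hs).continuousWithinAt.mono Icc_subset_Ici_self)
    (fun s hs => (hF s (Ico_subset_Icc_self hs)).mono (Ici_subset_Ici.2 hs.1))
    t (right_mem_Icc.2 ht)
  simp only [add_zero] at this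
  linarith

/-- `W (f s) + s` is conserved while `f > γ`, so `W ∘ f` stays bounded up to the first time `f`
reaches `γ`, which is impossible as `W → -∞` at `γ⁺`. -/
lemma lt_of_tendsto_nhdsGT_atBot (hΨ : ∀ x, γ < x → Ψ x ≠ 0)
    (hW : ∀ x, γ < x → HasDerivAt W (Ψ x)⁻¹ x)
    (hf : ∀ s, 0 ≤ s → HasDerivWithinAt f (-Ψ (f s)) (Ici 0) s)
    (hWγ : Tendsto W (𝓝[>] γ) atBot) (hf0 : γ < f 0) {t : ℝ}
    (ht : 0 ≤ t) : γ < f t := by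
  by_contra! hft
  have hfc : ContinuousOn f (Ici 0) := fun s hs => (hf s hs).continuousWithinAt
  set B := Icc 0 t ∩ f ⁻¹' Iic γ
  have hBbdd : BddBelow B := ⟨0, fun s hs => hs.1.1⟩
  have hs₀ : sInf B ∈ B := ((hfc.mono Icc_subset_Ici_self).preimage_isClosed_of_isClosed
    isClosed_Icc isClosed_Iic).csInf_mem ⟨t, right_mem_Icc.2 ht, hft⟩ hBbdd
  set s₀ := sInf B
  have hbefore : ∀ s ∈ Ico 0 s₀, γ < f s := fun s hs => lt_of_not_ge fun h =>
    hs.2.not_ge (csInf_le hBbdd ⟨⟨hs.1, hs.2.le.trans hs₀.1.2⟩, h⟩)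
  have hs₀pos : 0 < s₀ := hs₀.1.1.lt_of_ne fun h => (h ▸ hs₀.2 : f 0 ≤ γ).not_gt hf0
  have hIco : ∀ᶠ s in 𝓝[<] s₀, s ∈ Ico 0 s₀ := Ico_mem_nhdsLT hs₀pos
  have hfs₀ : Tendsto f (𝓝[<] s₀) (𝓝 (f s₀)) :=
    ((hfc s₀ hs₀.1.1).continuousAt (Ici_mem_nhds hs₀pos)).tendsto.mono_left nhdsWithin_le_nhds
  have hγ : f s₀ = γ :=
    le_antisymm hs₀.2 (ge_of_tendsto hfs₀ (hIco.mono fun s hs => (hbefore s hs).le))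
  have hbot : Tendsto (fun s => W (f s)) (𝓝[<] s₀) atBot :=
    hWγ.comp (tendsto_nhdsWithin_iff.2 ⟨hγ ▸ hfs₀, hIco.mono hbefore⟩)
  have hfinite : Tendsto (fun s => W (f s)) (𝓝[<] s₀) (𝓝 (W (f 0) - s₀)) :=
    (tendsto_const_nhds.sub (tendsto_id.mono_left nhdsWithin_le_nhds)).congr' <|
      hIco.mono fun _ hs => (comp_eq_sub_of_forall_mem_Icc hΨ hW hf hs.1 fun r hr =>
        hbefore r ⟨hr.1, hr.2.trans_lt hs.2⟩).symm
  exact not_tendsto_nhds_of_tendsto_atBot hbot _ hfinite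

lemma comp_eq_sub_of_tendsto_nhdsGT_atBot (hΨ : ∀ x, γ < x → Ψ x ≠ 0)
    (hW : ∀ x, γ < x → HasDerivAt W (Ψ x)⁻¹ x)
    (hf : ∀ s, 0 ≤ s → HasDerivWithinAt f (-Ψ (f s)) (Ici 0) s)
    (hWγ : Tendsto W (𝓝[>] γ) atBot) (hf0 : γ < f 0)
    {t : ℝ} (ht : 0 ≤ t) : γ < f t ∧ W (f t) = W (f 0) - t :=
  ⟨lt_of_tendsto_nhdsGT_atBot hΨ hW hf hWγ hf0 ht, comp_eq_sub_of_forall_mem_Icc hΨ hW hf ht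
    fun _ hs => lt_of_tendsto_nhdsGT_atBot hΨ hW hf hWγ hf0 hs.1⟩

end FirstIntegral

lemma tendsto_atTop_of_monotoneOn_comp {α : Type*} {l : Filter α} {W : ℝ → ℝ} {g : α → ℝ}
    {γ : ℝ} (hW : MonotoneOn W (Ioi γ)) (hg : ∀ᶠ i in l, γ < g i)
    (hWg : Tendsto (fun i => W (g i)) l atTop) : Tendsto g l atTop := by
  refine tendsto_atTop.2 fun M => ?_
  have hM : max M (γ + 1) ∈ Ioi γ := lt_max_of_lt_right (lt_add_one γ)
  filter_upwards [hg, hWg.eventually_gt_atTop (W (max M (γ + 1)))] with i hi hWi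
  exact (le_max_left _ _).trans (hW.reflect_lt hM hi hWi).le

lemma ne_top_and_apply_toReal_of_tendsto_comp {α : Type*} {l : Filter α} [l.NeBot]
    {W : ℝ → ℝ} {g : α → ℝ} {γ c J : ℝ} {v : ℝ≥0∞} (hγ : 0 ≤ γ) (hWc : ContinuousOn W (Ioi γ))
    (hWγ : Tendsto W (𝓝[>] γ) atBot) (hWtop : Tendsto W atTop (𝓝 J)) (hcJ : c ≠ J)
    (hg : ∀ᶠ i in l, γ < g i) (hWg : Tendsto (fun i => W (g i)) l (𝓝 c))
    (hv : Tendsto (fun i => ENNReal.ofReal (g i)) l (𝓝 v)) :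
    v ≠ ⊤ ∧ γ < v.toReal ∧ W v.toReal = c := by
  have hvtop : v ≠ ⊤ := by
    rintro rfl
    exact hcJ (tendsto_nhds_unique hWg (hWtop.comp (ENNReal.tendsto_ofReal_nhds_top.1 hv)))
  have hgv : Tendsto g l (𝓝 v.toReal) := ((ENNReal.tendsto_toReal hvtop).comp hv).congr' <|
    hg.mono fun i hi => ENNReal.toReal_ofReal (hγ.trans hi.le)
  have hγv : γ < v.toReal := by
    refine (ge_of_tendsto hgv (hg.mono fun i hi => hi.le)).lt_of_ne fun h => ?_
    rw [← h] at hgv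
    exact not_tendsto_nhds_of_tendsto_atBot
      (hWγ.comp (tendsto_nhdsWithin_iff.2 ⟨hgv, hg⟩)) c hWg
  exact ⟨hvtop, hγv,
    tendsto_nhds_unique ((hWc.continuousAt (Ioi_mem_nhds hγv)).tendsto.comp hgv) hWg⟩

lemma tendsto_intervalIntegral_atTop_of_not_integrableOn {f : ℝ → ℝ} {a : ℝ}
    (hf : ∀ x, a ≤ x → 0 ≤ f x) (hloc : ∀ b, IntegrableOn f (Ioc a b))
    (hnot : ¬ IntegrableOn f (Ioi a)) : Tendsto (fun b => ∫ x in a..b, f x) atTop atTop := by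
  refine tendsto_atTop_atTop.2 fun B => ?_
  by_contra! h
  refine hnot (integrableOn_Ioi_of_intervalIntegral_norm_bounded B a hloc tendsto_id
    ((eventually_ge_atTop a).mono fun x hax => ?_))
  obtain ⟨y, hxy, hy⟩ := h x
  have hnonneg : 0 ≤ᵐ[volume.restrict (Ioc a y)] f :=
    (ae_restrict_iff' measurableSet_Ioc).2 (ae_of_all _ fun z hz => hf z hz.1.le)
  calc ∫ z in a..x, ‖f z‖ = ∫ z in a..x, f z :=
        intervalIntegral.integral_congr fun z hz => Real.norm_of_nonneg <|
          hf z ((le_min le_rfl hax).trans hz.1)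
    _ ≤ ∫ z in a..y, f z := intervalIntegral.integral_mono_interval le_rfl hax hxy hnonneg
        ⟨hloc y, by simp [Ioc_eq_empty_of_le (hax.trans hxy)]⟩
    _ ≤ B := hy.le

/-- `γ` is the largest zero of `Ψ` below `θ₀`; by convexity `Ψ x ≤ Ψ θ₀ / (θ₀ - γ) * (x - γ)`
on `(γ, θ₀]`. -/
lemma IsBranchingMechanism.exists_barrier {Ψ : ℝ → ℝ} {a b : ℝ} {piM : Measure ℝ} {θ₀ : ℝ}
    (hbm : IsBranchingMechanism Ψ a b piM) (hpos : ∀ l, θ₀ ≤ l → 0 < Ψ l) :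
    ∃ γ, 0 ≤ γ ∧ γ < θ₀ ∧ (∀ x, γ < x → 0 < Ψ x) ∧ ContinuousOn Ψ (Ioi γ) ∧
      Tendsto (fun x => ∫ y in θ₀..x, (Ψ y)⁻¹) (𝓝[>] γ) atBot := by
  have hconv := hbm.convexOn
  have hcont : ContinuousOn Ψ (Ioi 0) :=
    (hconv.subset Ioi_subset_Ici_self (convex_Ioi 0)).continuousOn isOpen_Ioi
  obtain ⟨γ, hγ0, hγθ, hΨγ, hΨpos⟩ := exists_nonpos_and_pos_of_gt hcont hbm.apply_zero.le hpos
  have hcontγ := hcont.mono (Ioi_subset_Ioi hγ0)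
  have hθγ : 0 < θ₀ - γ := sub_pos.2 hγθ
  refine ⟨γ, hγ0, hγθ, hΨpos, hcontγ, tendsto_intervalIntegral_inv_nhdsGT_atBot hγθ
    (div_pos (hpos θ₀ le_rfl) hθγ) hcontγ hΨpos fun x hx => ?_⟩
  rw [div_mul_eq_mul_div, le_div_iff₀ hθγ]
  rcases hx.2.eq_or_lt with rfl | hxθ
  · exact le_rfl
  · nlinarith [hconv.secant_mono_aux1 hγ0 (hγ0.trans hγθ.le) hx.1 hxθ]

section PrimitiveOfInv

variable {Ψ : ℝ → ℝ} {γ θ₀ : ℝ}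

lemma IsFlow.eventually_intervalIntegral_inv_eq {u : ℝ → ℝ → ℝ} (hu : IsFlow Ψ u)
    (hθ₀ : 0 < θ₀) (hγθ : γ < θ₀) (hcont : ContinuousOn Ψ (Ioi γ))
    (hpos : ∀ x, γ < x → 0 < Ψ x)
    (hWγ : Tendsto (fun x => ∫ y in θ₀..x, (Ψ y)⁻¹) (𝓝[>] γ) atBot) {t : ℝ} (ht : 0 ≤ t) :
    ∀ᶠ l in atTop, γ < u t l ∧
      ∫ y in θ₀..u t l, (Ψ y)⁻¹ = (∫ y in θ₀..l, (Ψ y)⁻¹) - t := by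
  filter_upwards [eventually_ge_atTop θ₀] with l hl
  have hl0 : 0 < l := hθ₀.trans_le hl
  have := comp_eq_sub_of_tendsto_nhdsGT_atBot (fun x hx => (hpos x hx).ne')
    (fun x hx => hasDerivAt_intervalIntegral_of_continuousOn_Ioi
      (hcont.inv₀ fun y hy => (hpos y hy).ne') hγθ hx)
    (fun s hs => hu.2.2 l hl0 s hs) hWγ (by rw [hu.1 l hl0]; exact hγθ.trans_le hl) ht
  rwa [hu.1 l hl0] at this

lemma lt_top_and_integral_Ioi_inv_eq (hγ0 : 0 ≤ γ) (hγθ : γ < θ₀)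
    (hcont : ContinuousOn Ψ (Ioi γ)) (hpos : ∀ x, γ < x → 0 < Ψ x)
    (hWγ : Tendsto (fun x => ∫ y in θ₀..x, (Ψ y)⁻¹) (𝓝[>] γ) atBot)
    (hint : IntegrableOn (fun y => (Ψ y)⁻¹) (Ioi θ₀)) {g : ℝ → ℝ} {t : ℝ} (ht : t ≠ 0)
    (hg : ∀ᶠ l in atTop, γ < g l ∧
      ∫ y in θ₀..g l, (Ψ y)⁻¹ = (∫ y in θ₀..l, (Ψ y)⁻¹) - t)
    {v : ℝ≥0∞} (hv : Tendsto (fun l => ENNReal.ofReal (g l)) atTop (𝓝 v)) :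
    v < ⊤ ∧ ∫ y in Ioi v.toReal, (Ψ y)⁻¹ = t := by
  have hinv : ContinuousOn (fun y => (Ψ y)⁻¹) (Ioi γ) := hcont.inv₀ fun y hy => (hpos y hy).ne'
  have hW : ∀ x, γ < x → HasDerivAt (fun x => ∫ y in θ₀..x, (Ψ y)⁻¹) (Ψ x)⁻¹ x :=
    fun x hx => hasDerivAt_intervalIntegral_of_continuousOn_Ioi hinv hγθ hx
  have hWtop := intervalIntegral_tendsto_integral_Ioi θ₀ hint tendsto_id
  obtain ⟨hvt, hγv, hWv⟩ := ne_top_and_apply_toReal_of_tendsto_comp hγ0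
    (fun x hx => (hW x hx).continuousAt.continuousWithinAt) hWγ hWtop (sub_eq_self.not.2 ht)
    (hg.mono fun _ hl => hl.1) ((hWtop.sub_const t).congr' (hg.mono fun _ hl => hl.2.symm)) hv
  have hintv : IntegrableOn (fun y => (Ψ y)⁻¹) (Ioi v.toReal) :=
    (((hinv.mono fun _ hy => hγv.trans_le hy.1).integrableOn_Icc.mono_set
      Ioc_subset_Icc_self).union hint).mono_set fun y hy => (le_or_gt y θ₀).imp (⟨hy, ·⟩) id
  refine ⟨hvt.lt_top, ?_⟩
  rw [integral_Ioi_of_hasDerivAt_of_tendsto (hW _ hγv).continuousAt.continuousWithinAt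
    (fun x hx => hW x (hγv.trans hx)) hintv hWtop, hWv]
  ring

lemma tendsto_atTop_of_not_integrableOn_inv (hγθ : γ < θ₀) (hcont : ContinuousOn Ψ (Ioi γ))
    (hpos : ∀ x, γ < x → 0 < Ψ x) (hnint : ¬ IntegrableOn (fun y => (Ψ y)⁻¹) (Ioi θ₀))
    {g : ℝ → ℝ} {t : ℝ}
    (hg : ∀ᶠ l in atTop, γ < g l ∧
      ∫ y in θ₀..g l, (Ψ y)⁻¹ = (∫ y in θ₀..l, (Ψ y)⁻¹) - t) :
    Tendsto g atTop atTop := by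
  have hinv : ContinuousOn (fun y => (Ψ y)⁻¹) (Ioi γ) := hcont.inv₀ fun y hy => (hpos y hy).ne'
  have hW : ∀ x ∈ Ioi γ, HasDerivAt (fun x => ∫ y in θ₀..x, (Ψ y)⁻¹) (Ψ x)⁻¹ x :=
    fun x hx => hasDerivAt_intervalIntegral_of_continuousOn_Ioi hinv hγθ hx
  have hWmono : MonotoneOn (fun x => ∫ y in θ₀..x, (Ψ y)⁻¹) (Ioi γ) := by
    refine monotoneOn_of_hasDerivWithinAt_nonneg (f' := fun x => (Ψ x)⁻¹) (convex_Ioi γ)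
      (fun x hx => (hW x hx).continuousAt.continuousWithinAt) (fun x hx => ?_) fun x hx => ?_
    all_goals rw [interior_Ioi] at hx
    exacts [(hW x hx).hasDerivWithinAt, (inv_pos.2 (hpos x hx)).le]
  have hWtop := tendsto_intervalIntegral_atTop_of_not_integrableOn
    (fun x hx => (inv_pos.2 (hpos x (hγθ.trans_le hx))).le)
    (fun q => (hinv.mono fun _ hy => hγθ.trans_le hy.1).integrableOn_Icc.mono_set
      Ioc_subset_Icc_self) hnint
  exact tendsto_atTop_of_monotoneOn_comp hWmono (hg.mono fun _ hl => hl.1)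
    ((tendsto_atTop_add_const_right _ (-t) hWtop).congr'
      (hg.mono fun _ hl => (hl.2.trans (sub_eq_add_neg _ _)).symm))

end PrimitiveOfInv

theorem csbp_persistence_dichotomy_general
    (Ψ : ℝ → ℝ) (a b : ℝ) (piM : Measure ℝ) (u : ℝ → ℝ → ℝ)
    (hbm : IsBranchingMechanism Ψ a b piM) (hu : IsFlow Ψ u)
    (θ₀ : ℝ) (hθ₀ : 0 < θ₀) (hpos : ∀ l : ℝ, θ₀ ≤ l → 0 < Ψ l)
    (v : ℝ → ℝ≥0∞)
    (hv : ∀ t : ℝ, 0 < t → Tendsto (fun l => ENNReal.ofReal (u t l)) atTop (𝓝 (v t))) :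
    (IntegrableOn (fun l => (Ψ l)⁻¹) (Set.Ioi θ₀) →
      ∀ t : ℝ, 0 < t → v t < ⊤ ∧ (∫ l in Set.Ioi ((v t).toReal), (Ψ l)⁻¹) = t) ∧
    (¬ IntegrableOn (fun l => (Ψ l)⁻¹) (Set.Ioi θ₀) →
      ∀ t : ℝ, 0 < t → v t = ⊤) := by
  obtain ⟨γ, hγ0, hγθ, hΨpos, hcont, hWγ⟩ := hbm.exists_barrier hpos
  have hflow (t : ℝ) (ht : 0 < t) :=
    hu.eventually_intervalIntegral_inv_eq hθ₀ hγθ hcont hΨpos hWγ ht.le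
  refine ⟨fun hint t ht => ?_, fun hnint t ht => ?_⟩
  · exact lt_top_and_integral_Ioi_inv_eq hγ0 hγθ hcont hΨpos hWγ hint ht.ne' (hflow t ht) (hv t ht)
  · exact tendsto_nhds_unique (hv t ht) <| ENNReal.tendsto_ofReal_nhds_top.2 <|
      tendsto_atTop_of_not_integrableOn_inv hγθ hcont hΨpos hnint (hflow t ht)

/-- let `Ψ` be a non-linear branching mechanism with `Ψ > 0` on `[θ₀,∞)`
and let `u` be a flow for `Ψ`; for `t > 0` let `v(t) = lim_{λ→∞} u(t,λ) ∈ (0,∞]`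
(limit taken in `ℝ≥0∞`). If `∫_{θ₀}^{∞} dλ/Ψ(λ) < ∞` then `v(t) < ∞` and
`∫_{v(t)}^{∞} dλ/Ψ(λ) = t` for all `t > 0`; if `∫_{θ₀}^{∞} dλ/Ψ(λ) = ∞` then
`v(t) = ∞` for all `t > 0`. -/
theorem csbp_persistence_dichotomy
    (Ψ : ℝ → ℝ) (a b : ℝ) (piM : Measure ℝ) (u : ℝ → ℝ → ℝ)
    (hbm : IsBranchingMechanism Ψ a b piM) (hnl : IsNonLinear b piM) (hu : IsFlow Ψ u)
    (θ₀ : ℝ) (hθ₀ : 0 < θ₀) (hpos : ∀ l : ℝ, θ₀ ≤ l → 0 < Ψ l)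
    (v : ℝ → ℝ≥0∞)
    (hv : ∀ t : ℝ, 0 < t → Tendsto (fun l => ENNReal.ofReal (u t l)) atTop (𝓝 (v t))) :
    (IntegrableOn (fun l => (Ψ l)⁻¹) (Set.Ioi θ₀) →
      ∀ t : ℝ, 0 < t → v t < ⊤ ∧ (∫ l in Set.Ioi ((v t).toReal), (Ψ l)⁻¹) = t) ∧
    (¬ IntegrableOn (fun l => (Ψ l)⁻¹) (Set.Ioi θ₀) →
      ∀ t : ℝ, 0 < t → v t = ⊤) :=
  csbp_persistence_dichotomy_general Ψ a b piM u hbm hu θ₀ hθ₀ hpos v hv
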